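/- arXiv:2508.00276 — 3 statements merged into one kernel-verified Lean document; each statement's English description precedes it below -/
import Mathlib

section
/- Let k ≥ 4 be an integer, K := k - 3, and let φ be a satisfiable E3-CNF formula with m clauses C_1, …, C_m over variables x_1, …, x_n, with satisfying assignments α_start, α_end. Let y_1, …, y_K be K fresh variables and let ψ be the Ek-CNF formula over x_1,…,x_n,y_1,…,y_K whose clauses are C_j ∨ D for every j ∈ [m] and every clause D over y_1,…,y_K that contains each of y_1,…,y_K exactly once (positively or negatively); there are 2^K such D. Define β_start (resp. β_end) as α_start (resp. α_end) extended by assigning 0 to every y_i. If opt_φ(α_start ↔ α_end) = 1, then opt_ψ(β_start ↔ β_end) = 1. -/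
/-- An assignment maps each Boolean variable to a truth value. -/
abbrev Assignment (V : Type) := V → Bool

/-- A literal is a variable together with a polarity (`true` = positive);
a clause is a disjunction of literals, represented as the list of its literals
(its width is the length of this list). -/
abbrev Clause (V : Type) := List (V × Bool)

/-- A CNF formula is a conjunction of clauses, represented as a list
(clauses are counted with multiplicity). -/
abbrev CNF (V : Type) := List (Clause V)

/-- An assignment satisfies a clause if it makes at least one literal true. -/
def satClause {V : Type} (α : Assignment V) (C : Clause V) : Bool :=
  C.any fun l => α l.1 == l.2

/-- An assignment satisfies a CNF formula if it satisfies every clause. -/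
def satCNF {V : Type} (α : Assignment V) (φ : CNF V) : Bool :=
  φ.all fun C => satClause α C

/-- The fraction of clauses of `φ` satisfied by `α`. -/
noncomputable def val {V : Type} (φ : CNF V) (α : Assignment V) : ℝ :=
  ((φ.filter fun C => satClause α C).length : ℝ) / (φ.length : ℝ)

/-- The number of clauses of `φ` violated by `α`. -/
def numViol {V : Type} (φ : CNF V) (α : Assignment V) : ℕ :=
  (φ.filter fun C => !satClause α C).length

/-- Two assignments differ on at most one variable. -/
def Adjacent {V : Type} (α β : Assignment V) : Prop :=
  ∀ v w, α v ≠ β v → α w ≠ β w → v = w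

/-- `seq` is a reconfiguration sequence from `s` to `e`: a nonempty finite sequence of
assignments starting at `s`, ending at `e`, in which consecutive assignments differ
on at most one variable. -/
def IsReconfSeq {V : Type} (s e : Assignment V) (seq : List (Assignment V)) : Prop :=
  seq ≠ [] ∧ seq.head? = some s ∧ seq.getLast? = some e ∧ seq.Chain' Adjacent

/-- The value of a reconfiguration sequence: the minimum of `val φ` over its members. -/
noncomputable def seqVal {V : Type} (φ : CNF V) (seq : List (Assignment V)) : ℝ :=
  sInf (val φ '' {α | α ∈ seq})

/-- `opt_φ(s ↔ e)`: the optimal (maximum) value over all reconfiguration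
sequences from `s` to `e`. -/
noncomputable def optVal {V : Type} (φ : CNF V) (s e : Assignment V) : ℝ :=
  sSup (seqVal φ '' {seq | IsReconfSeq s e seq})

/-! An assignment violating some clause has value at most `1 - 1/|φ|`, so `opt_φ(αs ↔ αe) = 1`
holds exactly when some reconfiguration sequence runs through satisfying assignments only.
Extending every assignment of such a sequence by the same values on the fresh variables keeps
consecutive assignments adjacent, and each padded clause `C ∨ D` is satisfied through `C`. -/

section Value

variable {V : Type} {φ : CNF V} {α : Assignment V} {seq : List (Assignment V)} {s e : Assignment V}

lemma val_nonneg (φ : CNF V) (α : Assignment V) : 0 ≤ val φ α := by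
  unfold val; positivity

lemma val_le_one (φ : CNF V) (α : Assignment V) : val φ α ≤ 1 :=
  div_le_one_of_le₀ (by exact_mod_cast List.length_filter_le _ _) (Nat.cast_nonneg _)

lemma val_nil (α : Assignment V) : val ([] : CNF V) α = 0 := by
  simp [val]

lemma val_eq_one_of_satCNF (hφ : φ ≠ []) (h : satCNF α φ) : val φ α = 1 := by
  unfold val
  rw [List.filter_eq_self.mpr fun C hC => List.all_eq_true.mp h C hC, div_self]
  exact_mod_cast (List.length_pos_iff.mpr hφ).ne'

lemma val_le_one_sub_inv_of_not_satCNF (h : satCNF α φ = false) :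
    val φ α ≤ 1 - 1 / φ.length := by
  have hlt : (φ.filter fun C => satClause α C).length < φ.length := by
    rw [List.length_filter_lt_length_iff_exists]
    simpa [satCNF] using h
  have hm : (0 : ℝ) < φ.length := by exact_mod_cast (Nat.zero_le _).trans_lt hlt
  have hlt' : ((φ.filter fun C => satClause α C).length : ℝ) + 1 ≤ φ.length := by
    exact_mod_cast hlt
  rw [val, div_le_iff₀ hm, sub_mul, one_div_mul_cancel hm.ne']
  linarith

lemma seqVal_le_val (φ : CNF V) (hα : α ∈ seq) : seqVal φ seq ≤ val φ α :=
  csInf_le ⟨0, by rintro x ⟨β, -, rfl⟩; exact val_nonneg φ β⟩ ⟨α, hα, rfl⟩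

lemma seqVal_le_one (φ : CNF V) (hseq : seq ≠ []) : seqVal φ seq ≤ 1 := by
  obtain ⟨α, hα⟩ := List.exists_mem_of_ne_nil seq hseq
  exact (seqVal_le_val φ hα).trans (val_le_one φ α)

lemma seqVal_eq_one (hφ : φ ≠ []) (hseq : seq ≠ []) (hsat : ∀ α ∈ seq, satCNF α φ) :
    seqVal φ seq = 1 := by
  obtain ⟨α, hα⟩ := List.exists_mem_of_ne_nil seq hseq
  refine le_antisymm (seqVal_le_one φ hseq) (le_csInf ⟨_, α, hα, rfl⟩ ?_)
  rintro x ⟨β, hβ, rfl⟩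
  exact (val_eq_one_of_satCNF hφ (hsat β hβ)).ge

lemma optVal_le_one (φ : CNF V) (s e : Assignment V) : optVal φ s e ≤ 1 :=
  Real.sSup_le (by rintro x ⟨seq, hseq, rfl⟩; exact seqVal_le_one φ hseq.1) zero_le_one

lemma optVal_nil (s e : Assignment V) : optVal ([] : CNF V) s e = 0 := by
  refine le_antisymm (Real.sSup_nonpos ?_) (Real.sSup_nonneg ?_)
  all_goals rintro x ⟨seq, hseq, rfl⟩
  · obtain ⟨α, hα⟩ := List.exists_mem_of_ne_nil seq hseq.1
    exact (seqVal_le_val _ hα).trans (val_nil α).le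
  · exact Real.sInf_nonneg (by rintro x ⟨α, -, rfl⟩; exact val_nonneg _ α)

theorem optVal_eq_one_iff :
    optVal φ s e = 1 ↔ φ ≠ [] ∧ ∃ seq, IsReconfSeq s e seq ∧ ∀ α ∈ seq, satCNF α φ := by
  constructor
  · intro hopt
    have hφ : φ ≠ [] := by
      rintro rfl
      simp [optVal_nil] at hopt
    refine ⟨hφ, ?_⟩
    by_contra! hbad
    have hm : 1 ≤ (φ.length : ℝ) := by exact_mod_cast List.length_pos_iff.mpr hφ
    have hbound : optVal φ s e ≤ 1 - 1 / φ.length := by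
      refine Real.sSup_le ?_ (sub_nonneg.mpr ((div_le_one (by linarith)).mpr hm))
      rintro x ⟨seq, hseq, rfl⟩
      obtain ⟨α, hα, hunsat⟩ := hbad seq hseq
      exact (seqVal_le_val φ hα).trans
        (val_le_one_sub_inv_of_not_satCNF (Bool.eq_false_iff.mpr hunsat))
    have : 0 < 1 / (φ.length : ℝ) := by positivity
    linarith
  · rintro ⟨hφ, seq, hseq, hsat⟩
    refine le_antisymm (optVal_le_one φ s e) ?_
    rw [← seqVal_eq_one hφ hseq.1 hsat]
    exact le_csSup ⟨1, by rintro x ⟨seq, hseq, rfl⟩; exact seqVal_le_one φ hseq.1⟩ ⟨seq, hseq, rfl⟩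

end Value

section Padding

variable {V W : Type}

noncomputable def padCNF (φ : CNF V) (K : ℕ) : CNF (V ⊕ Fin K) :=
  φ.flatMap fun C => (Finset.univ : Finset (Fin K → Bool)).toList.map fun b =>
    C.map (fun l => (Sum.inl l.1, l.2)) ++ List.ofFn fun i => (Sum.inr i, b i)

lemma padCNF_ne_nil {φ : CNF V} (hφ : φ ≠ []) (K : ℕ) : padCNF φ K ≠ [] := by
  simpa [padCNF, List.flatMap_eq_nil_iff, Finset.univ_nonempty.ne_empty]
    using List.exists_mem_of_ne_nil φ hφ

lemma satCNF_padCNF {φ : CNF V} {α : Assignment V} (h : satCNF α φ) {K : ℕ} (g : Fin K → Bool) :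
    satCNF (Sum.elim α g) (padCNF φ K) := by
  simp only [satCNF, List.all_eq_true, padCNF, List.mem_flatMap, List.mem_map] at h ⊢
  rintro _ ⟨C, hC, b, -, rfl⟩
  obtain ⟨l, hl, hsat⟩ := List.any_eq_true.mp (h C hC)
  exact List.any_eq_true.mpr ⟨_, List.mem_append_left _ (List.mem_map_of_mem hl), hsat⟩

lemma Adjacent.sumElim {α β : Assignment V} (h : Adjacent α β) (g : W → Bool) :
    Adjacent (Sum.elim α g) (Sum.elim β g) := by
  rintro (v | v) (w | w) hv hw
  · exact congrArg Sum.inl (h v w hv hw)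
  all_goals simp_all

lemma IsReconfSeq.map_sumElim {s e : Assignment V} {seq : List (Assignment V)}
    (h : IsReconfSeq s e seq) (g : W → Bool) :
    IsReconfSeq (Sum.elim s g) (Sum.elim e g) (seq.map (Sum.elim · g)) := by
  obtain ⟨hne, hhead, hlast, hchain⟩ := h
  exact ⟨by simpa using hne, by simp [hhead], by simp [hlast],
    List.isChain_map_of_isChain _ (fun _ _ hab => hab.sumElim g) hchain⟩

end Padding

theorem stmt8_general {n k : ℕ} (φ : CNF (Fin n))
    (αs αe : Assignment (Fin n))
    (ψ : CNF (Fin n ⊕ Fin (k - 3)))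
    (hψ : ψ = φ.flatMap fun C =>
        (Finset.univ : Finset (Fin (k - 3) → Bool)).toList.map fun b =>
          C.map (fun l => (Sum.inl l.1, l.2)) ++ List.ofFn fun i => (Sum.inr i, b i))
    (βs βe : Assignment (Fin n ⊕ Fin (k - 3)))
    (hβs : βs = Sum.elim αs fun _ => false)
    (hβe : βe = Sum.elim αe fun _ => false) :
    optVal φ αs αe = 1 → optVal ψ βs βe = 1 := by
  intro hopt
  obtain ⟨hφ, seq, hseq, hsat⟩ := optVal_eq_one_iff.mp hopt
  obtain rfl : ψ = padCNF φ (k - 3) := hψ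
  subst hβs hβe
  refine optVal_eq_one_iff.mpr ⟨padCNF_ne_nil hφ _, _, hseq.map_sumElim _, ?_⟩
  exact List.forall_mem_map.mpr fun α hα => satCNF_padCNF (hsat α hα) _

/-- Completeness of the padding reduction from E3-SAT Reconfiguration to
Ek-SAT Reconfiguration (`k ≥ 4`, `K := k - 3`): `ψ` is obtained by appending to each clause
`C_j` of `φ` each of the `2^K` clauses `D` over the fresh variables `y₁, …, y_K` containing
every `yᵢ` exactly once, and `βs`, `βe` extend `αs`, `αe` by assigning `0` to every `yᵢ`.
If `opt_φ(αs ↔ αe) = 1`, then `opt_ψ(βs ↔ βe) = 1`. -/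
theorem stmt8 {n k : ℕ} (hk : 4 ≤ k) (φ : CNF (Fin n))
    (h3 : ∀ C ∈ φ, C.length = 3)
    (αs αe : Assignment (Fin n)) (hs : satCNF αs φ) (he : satCNF αe φ)
    (ψ : CNF (Fin n ⊕ Fin (k - 3)))
    (hψ : ψ = φ.flatMap fun C =>
        (Finset.univ : Finset (Fin (k - 3) → Bool)).toList.map fun b =>
          C.map (fun l => (Sum.inl l.1, l.2)) ++ List.ofFn fun i => (Sum.inr i, b i))
    (βs βe : Assignment (Fin n ⊕ Fin (k - 3)))
    (hβs : βs = Sum.elim αs fun _ => false)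
    (hβe : βe = Sum.elim αe fun _ => false) :
    optVal φ αs αe = 1 → optVal ψ βs βe = 1 :=
  stmt8_general φ αs αe ψ hψ βs βe hβs hβe
end

section
/- Let β be any assignment for the formula ψ obtained from an E3-CNF formula φ with m clauses C_1,…,C_m over x_1,…,x_n and K ≥ 1 fresh variables y_1,…,y_K, where the clauses of ψ are C_j ∨ D for every j ∈ [m] and every clause D over y_1,…,y_K containing each y_i exactly once (positively or negatively). Then the fraction of clauses of ψ violated by β equals (1/2^K) times the fraction of clauses of φ violated by the restriction of β to {x_1,…,x_n}; equivalently, 1 - val_ψ(β) = (1 - val_φ(β|_{x}))/2^K. -/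
/-- For the padded formula `ψ` (built from an E3-CNF formula `φ` with
`m ≥ 1` clauses and `K ≥ 1` fresh variables `y₁, …, y_K` by appending to each clause of `φ`
each of the `2^K` clauses over the `y`'s containing every `yᵢ` exactly once) and any
assignment `β` for `ψ`, the fraction of clauses of `ψ` violated by `β` equals `1/2^K` times
the fraction of clauses of `φ` violated by the restriction of `β` to the `x`-variables:
`1 - val_ψ(β) = (1 - val_φ(β|ₓ))/2^K`. -/
theorem stmt10 {n K : ℕ} (hK : 1 ≤ K) (φ : CNF (Fin n)) (hφ : 1 ≤ φ.length)
    (h3 : ∀ C ∈ φ, C.length = 3)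
    (ψ : CNF (Fin n ⊕ Fin K))
    (hψ : ψ = φ.flatMap fun C =>
        (Finset.univ : Finset (Fin K → Bool)).toList.map fun b =>
          C.map (fun l => (Sum.inl l.1, l.2)) ++ List.ofFn fun i => (Sum.inr i, b i))
    (β : Assignment (Fin n ⊕ Fin K)) :
    1 - val ψ β = (1 - val φ fun v => β (Sum.inl v)) / 2 ^ K := by
  set α : Assignment (Fin n) := fun v => β (Sum.inl v) with hα
  -- general fact: 1 - val = (countP violated)/length
  have key : ∀ {V : Type} (χ : CNF V) (γ : Assignment V), 1 ≤ χ.length →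
      1 - val χ γ = ((χ.countP fun C => !satClause γ C : ℕ) : ℝ) / (χ.length : ℝ) := by
    intro V χ γ h
    have hsplit : χ.length = (χ.countP fun C => satClause γ C)
        + (χ.countP fun C => !satClause γ C) := by
      simpa using (List.length_eq_countP_add_countP (fun C => satClause γ C) (l := χ))
    have hne : (χ.length : ℝ) ≠ 0 := by positivity
    rw [val, ← List.countP_eq_length_filter]
    field_simp
    rw [hsplit]
    push_cast
    ring
  have hcard : (Finset.univ : Finset (Fin K → Bool)).toList.length = 2 ^ K := by
    simp [Finset.length_toList]
  have hlen : ψ.length = φ.length * 2 ^ K := by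
    rw [hψ, List.length_flatMap]
    simp [Function.comp_def, hcard, List.map_const', List.sum_replicate, mul_comm]
  have inner : ∀ C : Clause (Fin n),
      (((Finset.univ : Finset (Fin K → Bool)).toList.map fun b =>
        C.map (fun l => (Sum.inl l.1, l.2)) ++ List.ofFn fun i => (Sum.inr i, b i)).countP
        (fun D => !satClause β D)) = if satClause α C then 0 else 1 := by
    intro C
    rw [List.countP_map]
    have hpred : ∀ b ∈ (Finset.univ : Finset (Fin K → Bool)).toList,
        (((fun D => !satClause β D) ∘ fun b =>
          C.map (fun l => (Sum.inl l.1, l.2)) ++ List.ofFn fun i => (Sum.inr i, b i)) b = true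
        ↔ (!satClause α C && (b == fun i => !β (Sum.inr i))) = true) := by
      intro b _
      simp only [Function.comp_apply, satClause, List.any_append, List.any_map, Bool.not_or,
        Bool.and_eq_true, Bool.not_eq_true', List.any_eq_true, List.any_eq_false, beq_iff_eq,
        funext_iff, hα, List.mem_ofFn, List.forall_mem_map]
      constructor
      · rintro ⟨h1, h2⟩
        refine ⟨h1, fun i => ?_⟩
        have := h2 (Sum.inr i, b i) ⟨i, rfl⟩
        simp at this
        cases hbi : b i <;> cases hβ : β (Sum.inr i) <;> simp_all
      · rintro ⟨h1, h2⟩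
        refine ⟨h1, ?_⟩
        rintro ⟨v, pb⟩ ⟨i, hi⟩
        cases hi
        have := h2 i
        cases hbi : b i <;> simp_all
    rw [List.countP_congr hpred]
    by_cases hC : satClause α C
    · simp [hC]
    · simp only [hC, Bool.not_false, Bool.true_and, if_neg hC]
      have hc : ((Finset.univ : Finset (Fin K → Bool)).toList.countP
          (fun b => b == fun i => !β (Sum.inr i))) =
          (Finset.univ : Finset (Fin K → Bool)).toList.count (fun i => !β (Sum.inr i)) := by
        simp [List.count]
      rw [hc, List.count_eq_one_of_mem (Finset.nodup_toList _) (by simp)]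
      simp
  have hviol : ∀ L : List (Clause (Fin n)),
      ((L.flatMap fun C =>
        (Finset.univ : Finset (Fin K → Bool)).toList.map fun b =>
          C.map (fun l => (Sum.inl l.1, l.2)) ++ List.ofFn fun i => (Sum.inr i, b i)).countP
        fun D => !satClause β D) = L.countP (fun C => !satClause α C) := by
    intro L
    induction L with
    | nil => simp
    | cons C L ih =>
      rw [List.flatMap_cons, List.countP_append, ih, List.countP_cons, inner C]
      by_cases hC : satClause α C <;> simp [hC, Nat.add_comm]
  rw [key ψ β (by rw [hlen]; exact Nat.mul_pos hφ (Nat.two_pow_pos K)), key φ α hφ, hψ, hviol φ, ← hψ, hlen]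
  push_cast
  rw [div_div]
end

section
/- Let φ be an E3-CNF formula with m clauses C_1, …, C_m over variables x_1, …, x_n, let y, z_1, z_2, z_3 be fresh variables, and let m_1, m_2, m_3 ≥ 1 be integers. Let ψ be the E4-CNF formula consisting of the clauses C_j ∨ y for every j ∈ [m], together with m_1 copies of ¬y ∨ z_1 ∨ ¬z_2 ∨ ¬z_3, m_2 copies of ¬y ∨ ¬z_1 ∨ z_2 ∨ ¬z_3, and m_3 copies of ¬y ∨ ¬z_1 ∨ ¬z_2 ∨ z_3. Let α_start assign 1 to all of x_1,…,x_n and (y,z_1,z_2,z_3) = (1,1,1,1), and let α_end assign 0 to all of x_1,…,x_n and (y,z_1,z_2,z_3) = (1,0,0,0). Suppose δ > 0 is such that every assignment for φ violates at least δ·m clauses of φ. Then every reconfiguration sequence from α_start to α_end contains an assignment that violates at least min{δ·m, m_1, m_2, m_3} clauses of ψ; in particular, if m_1 = m_2 = m_3 = δ·m (with δ·m an integer), then opt_ψ(α_start ↔ α_end) ≤ 1 - δ/(1 + 3δ). -/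
/-!
If some assignment of the sequence sets `y` to `0`, the clauses `C_j ∨ y` reduce to `φ`, so at
least `δ·m` of them are violated. Otherwise `y = 1` throughout, and the number of `zᵢ` set to `1`
drops from `3` to `0` by at most one per step, so it takes the value `2`: exactly one `zᵢ` is then
`0`, and all `mᵢ` copies of the `i`-th gadget clause are violated. For the bound on `opt`, note
that `ψ` has `m + m₁ + m₂ + m₃ = (1 + 3δ)·m` clauses.
-/

open scoped Finset

section numViol

variable {V : Type}

theorem numViol_append (φ ψ : CNF V) (α : Assignment V) :
    numViol (φ ++ ψ) α = numViol φ α + numViol ψ α := by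
  simp [numViol, List.filter_append]

theorem numViol_replicate (k : ℕ) (C : Clause V) (α : Assignment V) :
    numViol (List.replicate k C) α = if satClause α C then 0 else k := by
  cases h : satClause α C <;> simp [numViol, h]

theorem numViol_map_append_singleton {W : Type} (f : V → W) {ℓ : W × Bool} {α : Assignment W}
    (hℓ : α ℓ.1 ≠ ℓ.2) (φ : CNF V) :
    numViol (φ.map fun C => C.map (fun l => (f l.1, l.2)) ++ [ℓ]) α = numViol φ (α ∘ f) := by
  have hsat (C : Clause V) :
      satClause α (C.map (fun l => (f l.1, l.2)) ++ [ℓ]) = satClause (α ∘ f) C := by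
    have hℓ' : (α ℓ.1 == ℓ.2) = false := by simpa using hℓ
    simp [satClause, Function.comp_def, hℓ']
  simp only [numViol, List.filter_map, List.length_map, Function.comp_def, hsat]

theorem val_le_one_sub {φ : CNF V} {α : Assignment V} {c : ℝ} (hc : c ≤ 1)
    (h : c * φ.length ≤ numViol φ α) : val φ α ≤ 1 - c := by
  have hsplit : (φ.filter fun C => satClause α C).length + numViol φ α = φ.length := by
    simpa [numViol] using (φ.length_eq_length_filter_add fun C => satClause α C).symm
  rcases φ.length.eq_zero_or_pos with hlen | hlen
  · -- `val` of the empty formula is `0 / 0 = 0`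
    simp [val, hlen, hc]
  · rw [val, div_le_iff₀ (by exact_mod_cast hlen)]
    have := congrArg (Nat.cast : ℕ → ℝ) hsplit
    push_cast at this
    linarith

theorem optVal_le_one_sub {φ : CNF V} {s e : Assignment V} {c : ℝ} (hc : c ≤ 1)
    (h : ∀ seq, IsReconfSeq s e seq → ∃ β ∈ seq, c * φ.length ≤ numViol φ β) :
    optVal φ s e ≤ 1 - c := by
  refine Real.sSup_le ?_ (by linarith)
  rintro _ ⟨seq, hseq, rfl⟩
  obtain ⟨β, hβ, hle⟩ := h seq hseq
  exact csInf_le_of_le (seq.finite_toSet.image _).bddBelow ⟨β, hβ, rfl⟩ (val_le_one_sub hc hle)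

end numViol

theorem Adjacent.card_filter_le {V : Type} {α β : Assignment V} (h : Adjacent α β)
    (s : Finset V) : #{v ∈ s | α v} ≤ #{v ∈ s | β v} + 1 := by
  classical
  by_cases hdiff : ∃ w, α w ≠ β w
  · obtain ⟨w, hw⟩ := hdiff
    calc #{v ∈ s | α v} ≤ #(insert w {v ∈ s | β v}) := by
          refine Finset.card_le_card fun v hv => ?_
          by_cases hvw : v = w
          · simp [hvw]
          · have : α v = β v := by_contra fun hne => hvw (h v w hne hw)
            simp_all
      _ ≤ #{v ∈ s | β v} + 1 := Finset.card_insert_le _ _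
  · push Not at hdiff
    simp [hdiff]

theorem List.IsChain.exists_mem_eq_of_le_add_one {A : Type*} {f : A → ℕ} :
    ∀ {l : List A}, l.IsChain (fun x y => f x ≤ f y + 1) → ∀ {a b : A},
      l.head? = some a → l.getLast? = some b → ∀ {t : ℕ}, f b ≤ t → t ≤ f a → ∃ c ∈ l, f c = t
  | [], _, _, _, ha, _, _, _, _ => by simp at ha
  | [x], _, a, b, ha, hb, t, hbt, hta => by
      simp only [List.head?_cons, List.getLast?_singleton, Option.some.injEq] at ha hb
      subst ha hb
      exact ⟨x, by simp, le_antisymm hbt hta⟩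
  | x :: y :: l, hl, a, b, ha, hb, t, hbt, hta => by
      simp only [List.head?_cons, Option.some.injEq] at ha
      subst ha
      rw [List.isChain_cons_cons] at hl
      rcases hta.eq_or_lt with rfl | hlt
      · exact ⟨x, by simp, rfl⟩
      · rw [List.getLast?_cons_cons] at hb
        obtain ⟨c, hc, rfl⟩ := hl.2.exists_mem_eq_of_le_add_one rfl hb hbt (by omega)
        exact ⟨c, List.mem_cons_of_mem _ hc, rfl⟩

section Reduction

variable {n : ℕ}

/-- The variables `y, z₁, z₂, z₃` of the reduction are `Sum.inr 0, …, Sum.inr 3`. -/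
def gadgetClause (b₁ b₂ b₃ : Bool) : Clause (Fin n ⊕ Fin 4) :=
  [(Sum.inr 0, false), (Sum.inr 1, b₁), (Sum.inr 2, b₂), (Sum.inr 3, b₃)]

def reductionCNF (φ : CNF (Fin n)) (m₁ m₂ m₃ : ℕ) : CNF (Fin n ⊕ Fin 4) :=
  (φ.map fun C => C.map (fun l => (Sum.inl l.1, l.2)) ++ [(Sum.inr 0, true)])
    ++ List.replicate m₁ (gadgetClause true false false)
    ++ List.replicate m₂ (gadgetClause false true false)
    ++ List.replicate m₃ (gadgetClause false false true)

def zVars : Finset (Fin n ⊕ Fin 4) := {Sum.inr 1, Sum.inr 2, Sum.inr 3}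

theorem length_reductionCNF (φ : CNF (Fin n)) (m₁ m₂ m₃ : ℕ) :
    (reductionCNF φ m₁ m₂ m₃).length = φ.length + m₁ + m₂ + m₃ := by
  simp only [reductionCNF, List.length_append, List.length_map, List.length_replicate]

theorem numViol_le_numViol_reductionCNF {β : Assignment (Fin n ⊕ Fin 4)}
    (hy : β (Sum.inr 0) = false) (φ : CNF (Fin n)) (m₁ m₂ m₃ : ℕ) :
    numViol φ (β ∘ Sum.inl) ≤ numViol (reductionCNF φ m₁ m₂ m₃) β := by
  rw [reductionCNF, numViol_append, numViol_append, numViol_append,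
    numViol_map_append_singleton Sum.inl (by simp [hy])]
  omega

theorem min_le_numViol_reductionCNF {β : Assignment (Fin n ⊕ Fin 4)}
    (hy : β (Sum.inr 0) = true) (hz : #{v ∈ zVars | β v} = 2) (φ : CNF (Fin n))
    (m₁ m₂ m₃ : ℕ) : min m₁ (min m₂ m₃) ≤ numViol (reductionCNF φ m₁ m₂ m₃) β := by
  simp only [reductionCNF, numViol_append]
  cases h₁ : β (Sum.inr 1) <;> cases h₂ : β (Sum.inr 2) <;> cases h₃ : β (Sum.inr 3) <;>
    simp [zVars, Finset.filter_insert, Finset.filter_singleton, h₁, h₂, h₃] at hz <;>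
    simp [numViol_replicate, satClause, gadgetClause, hy, h₁, h₂, h₃]

theorem exists_mem_min_le_numViol_reductionCNF (φ : CNF (Fin n)) (m₁ m₂ m₃ : ℕ) {r : ℝ}
    (hφ : ∀ α : Assignment (Fin n), r ≤ numViol φ α) (seq : List (Assignment (Fin n ⊕ Fin 4)))
    (hseq : IsReconfSeq (fun _ => true) (Sum.elim (fun _ => false) fun i => i == 0) seq) :
    ∃ β ∈ seq, min r (min (m₁ : ℝ) (min (m₂ : ℝ) (m₃ : ℝ))) ≤
      numViol (reductionCNF φ m₁ m₂ m₃) β := by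
  obtain ⟨-, hhead, hlast, hchain⟩ := hseq
  by_cases hy : ∃ β ∈ seq, β (Sum.inr 0) = false
  · obtain ⟨β, hβ, hy⟩ := hy
    refine ⟨β, hβ, (min_le_left _ _).trans ((hφ (β ∘ Sum.inl)).trans ?_)⟩
    exact_mod_cast numViol_le_numViol_reductionCNF hy φ m₁ m₂ m₃
  · push Not at hy
    have hzchain : seq.IsChain fun α β => #{v ∈ zVars | α v} ≤ #{v ∈ zVars | β v} + 1 :=
      List.IsChain.imp (fun _ _ h => h.card_filter_le zVars) hchain
    obtain ⟨β, hβ, hz⟩ := hzchain.exists_mem_eq_of_le_add_one hhead hlast (t := 2)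
      (by simp [zVars, Finset.filter_insert, Finset.filter_singleton]) (by simp [zVars])
    refine ⟨β, hβ, (min_le_right _ _).trans ?_⟩
    exact_mod_cast min_le_numViol_reductionCNF (by simpa using hy β hβ) hz φ m₁ m₂ m₃

end Reduction

theorem stmt16_general {n : ℕ} (φ : CNF (Fin n)) (m₁ m₂ m₃ : ℕ)
    (ψ : CNF (Fin n ⊕ Fin 4))
    (hψ : ψ = (φ.map fun C => C.map (fun l => (Sum.inl l.1, l.2)) ++ [(Sum.inr 0, true)])
        ++ List.replicate m₁
            [(Sum.inr 0, false), (Sum.inr 1, true), (Sum.inr 2, false), (Sum.inr 3, false)]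
        ++ List.replicate m₂
            [(Sum.inr 0, false), (Sum.inr 1, false), (Sum.inr 2, true), (Sum.inr 3, false)]
        ++ List.replicate m₃
            [(Sum.inr 0, false), (Sum.inr 1, false), (Sum.inr 2, false), (Sum.inr 3, true)])
    (αs αe : Assignment (Fin n ⊕ Fin 4))
    (hαs : αs = fun _ => true)
    (hαe : αe = Sum.elim (fun _ => false) fun i => i == 0)
    (δ : ℝ) (hδ : 0 < δ)
    (hviol : ∀ α : Assignment (Fin n), δ * (φ.length : ℝ) ≤ (numViol φ α : ℝ)) :
    (∀ seq, IsReconfSeq αs αe seq →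
        ∃ β ∈ seq,
          min (δ * (φ.length : ℝ)) (min (m₁ : ℝ) (min (m₂ : ℝ) (m₃ : ℝ))) ≤
            (numViol ψ β : ℝ)) ∧
      ((m₁ : ℝ) = δ * (φ.length : ℝ) → (m₂ : ℝ) = δ * (φ.length : ℝ) →
        (m₃ : ℝ) = δ * (φ.length : ℝ) →
        optVal ψ αs αe ≤ 1 - δ / (1 + 3 * δ)) := by
  obtain rfl : ψ = reductionCNF φ m₁ m₂ m₃ := hψ
  subst hαs hαe
  have hsound := exists_mem_min_le_numViol_reductionCNF φ m₁ m₂ m₃ hviol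
  refine ⟨hsound, fun h₁ h₂ h₃ ↦ optVal_le_one_sub ?_ fun seq hseq ↦ ?_⟩
  · rw [div_le_one (by linarith)]
    linarith
  · obtain ⟨β, hβ, hle⟩ := hsound seq hseq
    rw [h₁, h₂, h₃, min_self, min_self, min_self] at hle
    refine ⟨β, hβ, le_of_eq_of_le ?_ hle⟩
    rw [length_reductionCNF]
    push_cast
    rw [h₁, h₂, h₃]
    field_simp
    ring

/-- Soundness of the reduction to E4-SAT Reconfiguration: with `ψ`, `αs`,
`αe` as in the reduction, if `δ > 0` is such that every assignment for `φ` violates at least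
`δ·m` clauses of `φ`, then every reconfiguration sequence from `αs` to `αe` contains an
assignment violating at least `min {δ·m, m₁, m₂, m₃}` clauses of `ψ`; in particular, if
`m₁ = m₂ = m₃ = δ·m` (so `δ·m` is an integer) then `opt_ψ(αs ↔ αe) ≤ 1 - δ/(1 + 3δ)`. -/
theorem stmt16 {n : ℕ} (φ : CNF (Fin n)) (h3 : ∀ C ∈ φ, C.length = 3)
    (m₁ m₂ m₃ : ℕ) (hm₁ : 1 ≤ m₁) (hm₂ : 1 ≤ m₂) (hm₃ : 1 ≤ m₃)
    (ψ : CNF (Fin n ⊕ Fin 4))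
    (hψ : ψ = (φ.map fun C => C.map (fun l => (Sum.inl l.1, l.2)) ++ [(Sum.inr 0, true)])
        ++ List.replicate m₁
            [(Sum.inr 0, false), (Sum.inr 1, true), (Sum.inr 2, false), (Sum.inr 3, false)]
        ++ List.replicate m₂
            [(Sum.inr 0, false), (Sum.inr 1, false), (Sum.inr 2, true), (Sum.inr 3, false)]
        ++ List.replicate m₃
            [(Sum.inr 0, false), (Sum.inr 1, false), (Sum.inr 2, false), (Sum.inr 3, true)])
    (αs αe : Assignment (Fin n ⊕ Fin 4))
    (hαs : αs = fun _ => true)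
    (hαe : αe = Sum.elim (fun _ => false) fun i => i == 0)
    (δ : ℝ) (hδ : 0 < δ)
    (hviol : ∀ α : Assignment (Fin n), δ * (φ.length : ℝ) ≤ (numViol φ α : ℝ)) :
    (∀ seq, IsReconfSeq αs αe seq →
        ∃ β ∈ seq,
          min (δ * (φ.length : ℝ)) (min (m₁ : ℝ) (min (m₂ : ℝ) (m₃ : ℝ))) ≤
            (numViol ψ β : ℝ)) ∧
      ((m₁ : ℝ) = δ * (φ.length : ℝ) → (m₂ : ℝ) = δ * (φ.length : ℝ) →
        (m₃ : ℝ) = δ * (φ.length : ℝ) →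
        optVal ψ αs αe ≤ 1 - δ / (1 + 3 * δ)) :=
  stmt16_general φ m₁ m₂ m₃ ψ hψ αs αe hαs hαe δ hδ hviol
end
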